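/- For a string Z with overlap(Z) = t and a character α: overlap(Z·α) = overlap(P[1..t]·α), i.e., the overlap after appending a character depends only on the current overlap value and the appended character. -/

import Mathlib

/-!
Removing the last letter of a prefix of `P` that is a suffix of `Z ++ [a]` leaves a prefix of `P`
that is a suffix of `Z`, so every candidate has length at most `t + 1`, where `t = overlapLen P Z`.
Since `P.take t ++ [a]` is itself a suffix of `Z ++ [a]` of length `t + 1`, a list of length at most
`t + 1` is a suffix of `Z ++ [a]` exactly when it is a suffix of `P.take t ++ [a]`.
-/

/-- `overlapLen P S` is the length of the longest prefix of `P` that is a suffix of `S`. -/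
def overlapLen {α : Type*} [DecidableEq α] (P S : List α) : ℕ :=
  Nat.findGreatest (fun k => P.take k <:+ S) P.length

theorem Nat.findGreatest_congr {P Q : ℕ → Prop} [DecidablePred P] [DecidablePred Q] {n : ℕ}
    (h : ∀ k ≤ n, (P k ↔ Q k)) : Nat.findGreatest P n = Nat.findGreatest Q n := by
  induction n with
  | zero => rfl
  | succ n ih =>
    simp only [Nat.findGreatest_succ, h (n + 1) le_rfl,
      ih fun k hk => h k (Nat.le_succ_of_le hk)]

namespace List

variable {α : Type*}

theorem IsSuffix.suffix_append_iff_of_length_le {u w Y Z : List α} (hYZ : Y <:+ Z)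
    (hu : u.length ≤ Y.length + w.length) : u <:+ Z ++ w ↔ u <:+ Y ++ w :=
  have hYwZw : Y ++ w <:+ Z ++ w := suffix_append_self_iff.2 hYZ
  ⟨fun h => suffix_of_suffix_length_le h hYwZw (by simpa using hu), fun h => h.trans hYwZw⟩

theorem dropLast_suffix_of_suffix_concat {u v : List α} {a : α} (h : u <:+ v ++ [a]) :
    u.dropLast <:+ v := by
  rcases suffix_concat_iff.1 h with rfl | ⟨t, rfl, ht⟩
  · exact nil_suffix
  · rwa [dropLast_concat]

end List

section Overlap

variable {α : Type*} [DecidableEq α] {P S : List α} {k : ℕ}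

theorem overlapLen_le_length : overlapLen P S ≤ P.length :=
  Nat.findGreatest_le _

theorem take_overlapLen_suffix : P.take (overlapLen P S) <:+ S :=
  Nat.findGreatest_spec (P := fun k => P.take k <:+ S) (Nat.zero_le _) (by simp)

theorem le_overlapLen (hk : k ≤ P.length) (h : P.take k <:+ S) : k ≤ overlapLen P S :=
  Nat.le_findGreatest hk h

theorem le_overlapLen_add_one_of_take_suffix_concat {a : α} (hk : k ≤ P.length)
    (h : P.take k <:+ S ++ [a]) : k ≤ overlapLen P S + 1 := by
  have hdrop : (P.take k).dropLast = P.take (k - 1) := by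
    simp [List.dropLast_eq_take, List.take_take, hk]
  have := le_overlapLen (S := S) (by omega) (hdrop ▸ List.dropLast_suffix_of_suffix_concat h)
  omega

theorem overlapLen_congr {S' : List α} (h : ∀ k ≤ P.length, (P.take k <:+ S ↔ P.take k <:+ S')) :
    overlapLen P S = overlapLen P S' :=
  Nat.findGreatest_congr h

end Overlap

/-- if overlap(Z) = t then overlap(Z·α) = overlap(P[1..t]·α). -/
theorem stmt_17 {α : Type*} [DecidableEq α] (P Z : List α) (t : ℕ) (a : α)
    (h : overlapLen P Z = t) :
    overlapLen P (Z ++ [a]) = overlapLen P (P.take t ++ [a]) := by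
  subst h
  have hlen : (P.take (overlapLen P Z)).length = overlapLen P Z := by
    simp [overlapLen_le_length]
  refine overlapLen_congr fun k hk => ?_
  by_cases hkt : k ≤ overlapLen P Z + 1
  · refine take_overlapLen_suffix.suffix_append_iff_of_length_le ?_
    rw [List.length_take, hlen, List.length_singleton]
    omega
  · refine iff_of_false (fun h => hkt (le_overlapLen_add_one_of_take_suffix_concat hk h))
      fun h => hkt ?_
    simpa [hk, hlen] using h.length_le
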